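/- arXiv:1506.02185 — 2 statements merged into one kernel-verified Lean document; each statement's English description precedes it below -/
import Mathlib

section
/- Let $D \subset \mathbb{R}^2$ be an open disk around the origin and let $F : D \to \mathbb{R}^2$ be continuous with $F(x,y) = y^l g(x,y)$, where $g : D \to \mathbb{R}^2$ is continuous and nowhere zero, and $l \ge 1$. Define $\hat F(x,y) = \mathrm{sign}(y)^l \cdot F(x,y)/\|F(x,y)\|$ on $D' = D \setminus (\mathbb{R} \times \{0\})$. Then $\hat F$ extends to a unique continuous map $\tilde F : D \to S^1$ into the unit circle, with $\tilde F(x,0) = g(x,0)/\|g(x,0)\|$. -/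
/-- Let `F(x,y) = y^l • g(x,y)` on an open disk `D` around the origin, with `g`
continuous and nowhere zero.  Then `F̂(x,y) = sign(y)^l • F(x,y)/‖F(x,y)‖`, defined off
the horizontal axis, extends to a unique continuous map `D → S¹`, whose value at `(x,0)`
is `g(x,0)/‖g(x,0)‖`. -/
theorem stmt3 {l : ℕ} (hl : 1 ≤ l) {D : Set (ℝ × ℝ)} (hD : IsOpen D)
    (h0 : (0, 0) ∈ D)
    {g F : ℝ × ℝ → ℝ × ℝ} (hg : ContinuousOn g D) (hgz : ∀ z ∈ D, g z ≠ 0)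
    (hF : ∀ z ∈ D, F z = z.2 ^ l • g z) :
    ∃ Ft : ℝ × ℝ → ℝ × ℝ,
      (ContinuousOn Ft D ∧ (∀ z ∈ D, ‖Ft z‖ = 1) ∧
        (∀ z ∈ D, z.2 ≠ 0 → Ft z = (Real.sign z.2) ^ l • (‖F z‖⁻¹ • F z)) ∧
        (∀ x : ℝ, (x, (0 : ℝ)) ∈ D → Ft (x, 0) = ‖g (x, 0)‖⁻¹ • g (x, 0))) ∧
      ∀ Ft' : ℝ × ℝ → ℝ × ℝ, ContinuousOn Ft' D →
        (∀ z ∈ D, z.2 ≠ 0 → Ft' z = (Real.sign z.2) ^ l • (‖F z‖⁻¹ • F z)) →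
        Set.EqOn Ft Ft' D := by
  set Ft : ℝ × ℝ → ℝ × ℝ := fun z => ‖g z‖⁻¹ • g z with hFt_def
  have hgn : ∀ z ∈ D, ‖g z‖ ≠ 0 := fun z hz => norm_ne_zero_iff.mpr (hgz z hz)
  have hcont : ContinuousOn Ft D := by
    exact (hg.norm.inv₀ hgn).smul hg
  have hnorm : ∀ z ∈ D, ‖Ft z‖ = 1 := by
    intro z hz
    simp only [hFt_def, norm_smul, norm_inv, norm_norm]
    exact inv_mul_cancel₀ (hgn z hz)
  have hoff : ∀ z ∈ D, z.2 ≠ 0 → Ft z = (Real.sign z.2) ^ l • (‖F z‖⁻¹ • F z) := by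
    intro z hz hy
    rw [hF z hz, norm_smul, Real.norm_eq_abs, abs_pow, smul_smul, smul_smul]
    have hsy : Real.sign z.2 * z.2 = |z.2| := by
      rcases lt_or_gt_of_ne hy with h | h
      · rw [Real.sign_of_neg h, abs_of_neg h]; ring
      · rw [Real.sign_of_pos h, abs_of_pos h]; ring
    have h1 : Real.sign z.2 ^ l * z.2 ^ l = |z.2| ^ l := by rw [← mul_pow, hsy]
    have hya : |z.2| ≠ 0 := abs_ne_zero.mpr hy
    have : Real.sign z.2 ^ l * ((|z.2| ^ l * ‖g z‖)⁻¹ * z.2 ^ l) = ‖g z‖⁻¹ := by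
      have : Real.sign z.2 ^ l * ((|z.2| ^ l * ‖g z‖)⁻¹ * z.2 ^ l)
          = (Real.sign z.2 ^ l * z.2 ^ l) * (|z.2| ^ l * ‖g z‖)⁻¹ := by ring
      rw [this, h1, mul_inv, ← mul_assoc, mul_inv_cancel₀ (pow_ne_zero _ hya), one_mul]
    rw [mul_assoc, this]
  refine ⟨Ft, ⟨hcont, hnorm, hoff, fun x hx => rfl⟩, ?_⟩
  intro Ft' hcont' hoff'
  intro z hz
  by_cases hy : z.2 = 0
  · -- use density of the off-axis set
    set s : Set (ℝ × ℝ) := D ∩ {p | p.2 ≠ 0} with hs_def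
    have hsub : s ⊆ D := Set.inter_subset_left
    have htends : Filter.Tendsto (fun n : ℕ => (z.1, (1 : ℝ) / (n + 1))) Filter.atTop (nhds z) := by
      have : Filter.Tendsto (fun n : ℕ => (1 : ℝ) / (n + 1)) Filter.atTop (nhds 0) :=
        tendsto_one_div_add_atTop_nhds_zero_nat
      have hz2 : z = (z.1, 0) := by rw [← hy]
      rw [hz2]
      exact (tendsto_const_nhds.prodMk_nhds this)
    have hev : ∀ᶠ n : ℕ in Filter.atTop, (z.1, (1 : ℝ) / (n + 1)) ∈ s := by
      have hmem : ∀ᶠ n : ℕ in Filter.atTop, (z.1, (1 : ℝ) / (n + 1)) ∈ D :=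
        htends.eventually (hD.mem_nhds hz)
      filter_upwards [hmem] with n hn
      refine ⟨hn, ?_⟩
      simp only [Set.mem_setOf_eq]
      positivity
    have hcl : z ∈ closure s := mem_closure_of_tendsto htends hev
    haveI : (nhdsWithin z s).NeBot := mem_closure_iff_nhdsWithin_neBot.mp hcl
    have h1 : Filter.Tendsto Ft (nhdsWithin z s) (nhds (Ft z)) :=
      ((hcont z hz).mono hsub)
    have h2 : Filter.Tendsto Ft' (nhdsWithin z s) (nhds (Ft' z)) :=
      ((hcont' z hz).mono hsub)
    have heq : Filter.Tendsto Ft (nhdsWithin z s) (nhds (Ft' z)) := by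
      refine h2.congr' ?_
      filter_upwards [self_mem_nhdsWithin] with p hp
      rw [hoff' p hp.1 hp.2, ← hoff p hp.1 hp.2]
    exact tendsto_nhds_unique h1 heq
  · rw [hoff z hz hy, hoff' z hz hy]
end

section
/- Let $\Phi$ be a continuous flow on a topological space $M$, and let $L \subset M$ be a compact connected invariant set homeomorphic to $S^1$ containing no fixed points of $\Phi$. Then $L$ is a single periodic orbit of $\Phi$. -/
/-!
Restrict the flow to `L` and lift it along the covering `ℝ → S¹ ≅ L` to a flow on `ℝ`. Every
time-`t` map of a flow on `ℝ` is the square of the time-`t/2` map, a continuous injection, so it is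
increasing; hence the supremum (or infimum) of a bounded orbit would be a fixed point. Without fixed
points each lifted orbit is therefore all of `ℝ`, in particular it reaches `a + 2π` from `a`, which
gives a nonzero period downstairs and shows that a single orbit covers `L`. The periods form a
closed subgroup of `ℝ` that is neither `ℝ` nor trivial, so it has a least positive element.
-/

open Set Function

namespace Flow

variable {τ α : Type*} [TopologicalSpace τ] [TopologicalSpace α]

section AddGroup

variable [AddGroup τ] (ϕ : Flow τ α)

def stabilizer (x : α) : AddSubgroup τ :=
  @AddAction.stabilizer τ α _ ϕ.toAddAction x

theorem mem_stabilizer {x : α} {t : τ} : t ∈ ϕ.stabilizer x ↔ ϕ t x = x :=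
  Iff.rfl

theorem isClosed_stabilizer [T1Space α] (x : α) : IsClosed (ϕ.stabilizer x : Set τ) :=
  isClosed_singleton.preimage (ϕ.continuous continuous_id continuous_const)

theorem map_eq_of_forall_map_le [PartialOrder α] (hmono : ∀ t, Monotone (ϕ t)) {y : α}
    (hy : ∀ t, ϕ t y ≤ y) (t : τ) : ϕ t y = y := by
  refine (hy t).antisymm ?_
  calc y = ϕ t (ϕ (-t) y) := by rw [← map_add, add_neg_cancel, map_zero_apply]
    _ ≤ ϕ t y := hmono t (hy (-t))

theorem exists_fixed_of_bddAbove_orbit [ConditionallyCompleteLinearOrder α] [OrderTopology α]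
    (hmono : ∀ t, Monotone (ϕ t)) {x : α} (hx : BddAbove (ϕ.orbit x)) :
    ∃ y, ∀ t, ϕ t y = y := by
  refine ⟨sSup (ϕ.orbit x), ϕ.map_eq_of_forall_map_le hmono fun s => ?_⟩
  have hmaps : ϕ.orbit x ⊆ ϕ s ⁻¹' Iic (sSup (ϕ.orbit x)) :=
    fun _ hy => le_csSup hx (ϕ.mem_orbit_of_mem_orbit s hy)
  exact (isClosed_Iic.preimage (ϕ.continuous_toFun s)).closure_subset_iff.2 hmaps
    (csSup_mem_closure (ϕ.nonempty_orbit x) hx)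

theorem exists_fixed_of_bddBelow_orbit [ConditionallyCompleteLinearOrder α] [OrderTopology α]
    (hmono : ∀ t, Monotone (ϕ t)) {x : α} (hx : BddBelow (ϕ.orbit x)) :
    ∃ y, ∀ t, ϕ t y = y :=
  exists_fixed_of_bddAbove_orbit (α := αᵒᵈ) ϕ (fun t => (hmono t).dual) hx

end AddGroup

theorem exists_minimal_period [T1Space α] (ϕ : Flow ℝ α) {x : α} (hx : ∃ t, ϕ t x ≠ x) {T : ℝ}
    (hT0 : T ≠ 0) (hT : ϕ T x = x) :
    ∃ T, 0 < T ∧ ϕ T x = x ∧ ∀ t, 0 < t → t < T → ϕ t x ≠ x := by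
  obtain ⟨T, ⟨hTx, hTpos⟩, hTmin⟩ : ∃ T, IsLeast {t | t ∈ ϕ.stabilizer x ∧ 0 < t} T := by
    by_contra hmin
    have hne : ϕ.stabilizer x ≠ ⊥ := fun h => hT0 <| by
      simpa [h] using (ϕ.mem_stabilizer (t := T)).2 hT
    have hdense := (ϕ.stabilizer x).dense_of_no_min hne hmin
    obtain ⟨t, ht⟩ := hx
    refine ht ((ϕ.mem_stabilizer).1 ?_)
    rw [← SetLike.mem_coe, ← (ϕ.isClosed_stabilizer x).closure_eq, hdense.closure_eq]
    exact mem_univ t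
  exact ⟨T, hTpos, hTx, fun t ht0 htT htx => (hTmin ⟨htx, ht0⟩).not_gt htT⟩

section LinearOrder

variable [ConditionallyCompleteLinearOrder α] [OrderTopology α] [DenselyOrdered α]
  (ϕ : Flow ℝ α)

theorem strictMono_apply (t : ℝ) : StrictMono (ϕ t) := by
  have hhalf : ϕ t = ϕ (t / 2) ∘ ϕ (t / 2) := funext fun x => by
    rw [comp_apply, ← map_add, add_halves]
  rcases (ϕ.continuous_toFun (t / 2)).strictMono_of_inj (ϕ.toHomeomorph (t / 2)).injective
    with h | h
  · exact hhalf ▸ h.comp h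
  · exact hhalf ▸ h.comp h

theorem orbit_eq_univ (hfix : ∀ x, ∃ t, ϕ t x ≠ x) (x : α) : ϕ.orbit x = univ := by
  have hmono : ∀ t, Monotone (ϕ t) := fun t => (ϕ.strictMono_apply t).monotone
  have hnofix : ¬∃ y, ∀ t, ϕ t y = y := fun ⟨y, hy⟩ => (hfix y).elim fun t ht => ht (hy t)
  refine IsPreconnected.eq_univ_of_unbounded ?_
    (fun h => hnofix (ϕ.exists_fixed_of_bddBelow_orbit hmono h))
    (fun h => hnofix (ϕ.exists_fixed_of_bddAbove_orbit hmono h))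
  exact isPreconnected_range (ϕ.continuous continuous_id continuous_const)

end LinearOrder

end Flow

theorem IsCoveringMap.exists_flow_semiconj {E X : Type*} [TopologicalSpace E] [TopologicalSpace X]
    [ContractibleSpace E] [LocallyPathConnectedSpace E] {p : E → X} (hp : IsCoveringMap p)
    (ψ : Flow ℝ X) : ∃ ϕ : Flow ℝ E, ∀ t, Semiconj p (ϕ t) (ψ t) := by
  obtain ⟨e₀⟩ : Nonempty E := inferInstance
  let f : C(ℝ × E, X) :=
    ⟨fun q => ψ q.1 (p q.2), ψ.continuous continuous_fst (hp.continuous.comp continuous_snd)⟩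
  obtain ⟨F, ⟨hF₀, hF⟩, -⟩ :=
    hp.existsUnique_continuousMap_lifts f (0, e₀) e₀ (by simp [f, Flow.map_zero_apply])
  have hFp : ∀ t e, p (F (t, e)) = ψ t (p e) := fun t e => congrFun hF (t, e)
  have hF0 : ∀ e, F (0, e) = e := congrFun <|
    hp.eq_of_comp_eq (g₁ := fun e => F (0, e)) (g₂ := id) (by fun_prop) continuous_id
      (funext fun e => by simp [hFp, Flow.map_zero_apply]) e₀ hF₀
  refine ⟨{ toFun t e := F (t, e), cont' := F.continuous, map_add' := ?_, map_zero' := hF0 },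
    fun t e => hFp t e⟩
  intro t₁ t₂ e
  have hlift := hp.eq_of_comp_eq (g₁ := fun s => F (s + t₂, e)) (g₂ := fun s => F (s, F (t₂, e)))
    (by fun_prop) (by fun_prop) (funext fun s => by simp [hFp, Flow.map_add]) 0 (by simp [hF0])
  exact congrFun hlift t₁

theorem Flow.exists_period_and_orbit_eq_univ_of_isCoveringMap {X : Type*} [TopologicalSpace X]
    (ψ : Flow ℝ X) {p : ℝ → X} (hp : IsCoveringMap p) (hsurj : Surjective p) {c : ℝ} (hc : c ≠ 0)
    (hper : Periodic p c) (hfix : ∀ x, ∃ t, ψ t x ≠ x) (x : X) :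
    (∃ T ≠ 0, ψ T x = x) ∧ ψ.orbit x = univ := by
  obtain ⟨ϕ, hϕ⟩ := hp.exists_flow_semiconj ψ
  obtain ⟨a, rfl⟩ := hsurj x
  have hϕfix : ∀ b, ∃ t, ϕ t b ≠ b := fun b =>
    (hfix (p b)).imp fun t ht hb => ht (by rw [← hϕ t b, hb])
  have horbit : ∀ b, ∃ t, ϕ t a = b := fun b =>
    ϕ.mem_orbit_iff.1 (ϕ.orbit_eq_univ hϕfix a ▸ mem_univ b)
  refine ⟨?_, eq_univ_of_forall fun y => ?_⟩
  · obtain ⟨T, hT⟩ := horbit (a + c)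
    refine ⟨T, ?_, by rw [← hϕ T a, hT, hper]⟩
    rintro rfl
    exact hc (by simpa [Flow.map_zero_apply] using hT)
  · obtain ⟨b, rfl⟩ := hsurj y
    obtain ⟨t, rfl⟩ := horbit b
    exact ψ.mem_orbit_iff.2 ⟨t, (hϕ t a).symm⟩

noncomputable def circleHomeomorphSphere :
    Circle ≃ₜ Metric.sphere (0 : EuclideanSpace ℝ (Fin 2)) 1 :=
  Complex.orthonormalBasisOneI.repr.toHomeomorph.subtype fun z => by
    simp [Submonoid.unitSphere]

theorem stmt6_general {M : Type*} [TopologicalSpace M] (Φ : Flow ℝ M) {L : Set M}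
    (hinv : ∀ t : ℝ, Φ t '' L = L)
    (hcirc : Nonempty (L ≃ₜ (Metric.sphere (0 : EuclideanSpace ℝ (Fin 2)) 1)))
    (hnofix : ∀ p ∈ L, ∃ t : ℝ, Φ t p ≠ p) :
    ∃ p ∈ L, ∃ T : ℝ, 0 < T ∧ Φ T p = p ∧ (∀ t : ℝ, 0 < t → t < T → Φ t p ≠ p) ∧
      L = Set.range fun t : ℝ => Φ t p := by
  obtain ⟨e⟩ := hcirc
  have : T1Space L := e.isEmbedding.t1Space
  let ψ : Flow ℝ L := Φ.restrict ((Φ.isInvariant_iff_image_eq L).2 hinv)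
  let p : ℝ → L := e.symm ∘ circleHomeomorphSphere ∘ Circle.exp
  have hp : IsCoveringMap p := (Circle.isCoveringMap_exp.homeomorph_comp _).homeomorph_comp _
  have hsurj : Surjective p :=
    e.symm.surjective.comp (circleHomeomorphSphere.surjective.comp Circle.exp_surjective)
  have hψfix : ∀ x : L, ∃ t, ψ t x ≠ x := fun x =>
    (hnofix x x.2).imp fun t ht hx => ht (congrArg Subtype.val hx)
  obtain ⟨⟨T, hT0, hT⟩, horbit⟩ := ψ.exists_period_and_orbit_eq_univ_of_isCoveringMap hp hsurj
    Real.two_pi_pos.ne' (Circle.periodic_exp.comp (e.symm ∘ circleHomeomorphSphere)) hψfix (p 0)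
  obtain ⟨T, hTpos, hTp, hTmin⟩ := ψ.exists_minimal_period (hψfix (p 0)) hT0 hT
  refine ⟨p 0, (p 0).2, T, hTpos, congrArg Subtype.val hTp,
    fun t ht0 htT ht => hTmin t ht0 htT (Subtype.ext ht), ?_⟩
  ext y
  refine ⟨fun hy => ?_, fun ⟨t, hty⟩ => hty ▸ (ψ t (p 0)).2⟩
  obtain ⟨t, ht⟩ := ψ.mem_orbit_iff.1 (horbit ▸ mem_univ (⟨y, hy⟩ : L))
  exact ⟨t, congrArg Subtype.val ht⟩

/-- A compact connected invariant set of a continuous flow, homeomorphic to the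
circle and containing no fixed points, is a single periodic orbit. -/
theorem stmt6 {M : Type*} [TopologicalSpace M] (Φ : Flow ℝ M) {L : Set M}
    (hcomp : IsCompact L) (hconn : IsConnected L)
    (hinv : ∀ t : ℝ, Φ t '' L = L)
    (hcirc : Nonempty (L ≃ₜ (Metric.sphere (0 : EuclideanSpace ℝ (Fin 2)) 1)))
    (hnofix : ∀ p ∈ L, ∃ t : ℝ, Φ t p ≠ p) :
    ∃ p ∈ L, ∃ T : ℝ, 0 < T ∧ Φ T p = p ∧ (∀ t : ℝ, 0 < t → t < T → Φ t p ≠ p) ∧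
      L = Set.range fun t : ℝ => Φ t p :=
  stmt6_general Φ hinv hcirc hnofix
end
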